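/- Let H ⊆ 𝒫(I) be a simply connected combinatorial strata structure with minimal set of indices I, let ∞ ∉ I, and let J₀ = {i₁, i₂, i₃} ∈ H(3). Set B = {J ∈ H : #J ≤ 2 and J ∪ J₀ ∈ H}. Then H′ = (H_3 \ {J₀}) ∪ {J ∪ {∞} : J ∈ B} is a simply connected combinatorial strata structure with minimal set of indices I ∪ {∞}. -/

import Mathlib

/-!
The blow-up `H′` keeps the vertices of `H` and adds `{∞}`, which is joined exactly to the
vertices `b` with `{b} ∪ J₀ ∈ H`. It loses the triangle `J₀` but gains every triangle
`{x, y, ∞}` with `{x, y} ∪ J₀ ∈ H`; in particular each edge of `J₀` spans a triangle with `∞`.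
Hence homotopies of `H` survive in `H′`: the move across `J₀ = {x, y, z}` is replaced by three
moves across triangles through `∞`. Conversely, fix a hub `a ∈ J₀`. Every neighbour `b` of `∞`
spans the triangle `{a, b, ∞}`, so a passage `{b}, {∞}, {c}` through `∞` can be rerouted through
`{a}`. Thus every path of `H′` is homotopic to a path of `H` with `{∞}` possibly attached at its
ends, and simple connectivity passes from `H` to `H′`.
-/

/-- A combinatorial strata structure with minimal set of indices the (finite) type `I`:
an open subset of `𝒫(I)` (i.e. a family closed under taking subsets) containing all
singletons. -/
def IsCSS {I : Type*} (H : Set (Finset I)) : Prop :=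
  (∀ J ∈ H, ∀ J' : Finset I, J' ⊆ J → J' ∈ H) ∧ ∀ i : I, ({i} : Finset I) ∈ H

/-- `level H k` is `H(k)`, the set of strata of `H` with exactly `k` elements. -/
def level {I : Type*} (H : Set (Finset I)) (k : ℕ) : Set (Finset I) :=
  {J ∈ H | J.card = k}

/-- A `k`-path in `H`: a nonempty sequence of strata of `H(k)` such that the union of
any two consecutive entries lies in `H(k+1)`. -/
def IsKPath {I : Type*} [DecidableEq I] (H : Set (Finset I)) (k : ℕ)
    (γ : List (Finset I)) : Prop :=
  γ ≠ [] ∧ (∀ J ∈ γ, J ∈ level H k) ∧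
    γ.Chain' fun J J' => (J ∪ J') ∈ level H (k + 1)

/-- The path `γ` joins `J` and `J'`. -/
def Joins {I : Type*} (γ : List (Finset I)) (J J' : Finset I) : Prop :=
  γ.head? = some J ∧ γ.getLast? = some J'

/-- The subsupport of a path: the sequence of unions of consecutive entries. -/
def subSup {I : Type*} [DecidableEq I] (γ : List (Finset I)) : List (Finset I) :=
  List.zipWith (· ∪ ·) γ γ.tail

open Classical in
/-- `kappa B γ`: the number of entries of the subsupport of `γ` that belong to `B`. -/
noncomputable def kappa {I : Type*} [DecidableEq I] (B : Set (Finset I))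
    (γ : List (Finset I)) : ℕ :=
  (subSup γ).countP fun J => decide (J ∈ B)

/-- `A` is `k`-connected in `H`: any two elements of `A` are joined by a `k`-path in `H`
with support contained in `A`. -/
def KConnectedIn {I : Type*} [DecidableEq I] (H : Set (Finset I)) (k : ℕ)
    (A : Set (Finset I)) : Prop :=
  ∀ J ∈ A, ∀ J' ∈ A, ∃ γ : List (Finset I),
    IsKPath H k γ ∧ Joins γ J J' ∧ ∀ K ∈ γ, K ∈ A

/-- `C` is a `k`-connected component of `A` in `H`: a maximal nonempty `k`-connected
subset of `A`. -/
def IsKComponent {I : Type*} [DecidableEq I] (H : Set (Finset I)) (k : ℕ)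
    (A C : Set (Finset I)) : Prop :=
  C.Nonempty ∧ C ⊆ A ∧ KConnectedIn H k C ∧
    ∀ C' : Set (Finset I), C ⊆ C' → C' ⊆ A → KConnectedIn H k C' → C' = C

/-- `H` is 1-connected: `H(1)` is 1-connected in `H`. -/
def OneConnected {I : Type*} [DecidableEq I] (H : Set (Finset I)) : Prop :=
  KConnectedIn H 1 (level H 1)

/-- One-sided version of an elementary homotopic pair of 1-paths in `H`. -/
def ElemPairCore {I : Type*} [DecidableEq I] (H : Set (Finset I))
    (ε ε' : List (Finset I)) : Prop :=
  ε = ε'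
  ∨ (∃ i₁ i₂ : I, ε = [{i₁}, {i₂}, {i₁}] ∧ ε' = [{i₁}])
  ∨ (∃ i₁ i₂ i₃ : I, ε = [{i₁}, {i₂}] ∧ ε' = [{i₁}, {i₃}, {i₂}] ∧
      IsKPath H 2 [{i₁, i₃}, {i₃, i₂}])

/-- An elementary homotopic pair of 1-paths in `H` (up to swapping the two paths). -/
def ElemPair {I : Type*} [DecidableEq I] (H : Set (Finset I))
    (ε ε' : List (Finset I)) : Prop :=
  ElemPairCore H ε ε' ∨ ElemPairCore H ε' ε

/-- `γ₂` is obtained from `γ₁` by an elementary homotopy. -/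
def ElemHomotopy {I : Type*} [DecidableEq I] (H : Set (Finset I))
    (γ₁ γ₂ : List (Finset I)) : Prop :=
  ∃ δ ε₁ ε₂ ρ : List (Finset I),
    ElemPair H ε₁ ε₂ ∧ γ₁ = δ ++ ε₁ ++ ρ ∧ γ₂ = δ ++ ε₂ ++ ρ

/-- `γ` and `γ'` are homotopically equivalent in `H` with support in `A`: they are linked
by a finite chain of elementary homotopies in which every intermediate 1-path has
support in `A`. -/
def HomotopicIn {I : Type*} [DecidableEq I] (H A : Set (Finset I))
    (γ γ' : List (Finset I)) : Prop :=
  (IsKPath H 1 γ ∧ ∀ J ∈ γ, J ∈ A) ∧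
    Relation.ReflTransGen
      (fun g₁ g₂ => ElemHomotopy H g₁ g₂ ∧ IsKPath H 1 g₂ ∧ ∀ J ∈ g₂, J ∈ A) γ γ'

/-- A 1-connected subset `A ⊆ H(1)` is simply connected in `H`: any two 1-paths in `H`
with support in `A` joining the same strata are homotopically equivalent in `H` with
support in `A`. -/
def SimplyConnectedIn {I : Type*} [DecidableEq I] (H A : Set (Finset I)) : Prop :=
  KConnectedIn H 1 A ∧
    ∀ γ γ' : List (Finset I), IsKPath H 1 γ → IsKPath H 1 γ' →
      (∀ J ∈ γ, J ∈ A) → (∀ J ∈ γ', J ∈ A) →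
      γ.head? = γ'.head? → γ.getLast? = γ'.getLast? →
      HomotopicIn H A γ γ'

/-- `H` is simply connected: `H(1)` is simply connected in `H`. -/
def SimplyConnected {I : Type*} [DecidableEq I] (H : Set (Finset I)) : Prop :=
  SimplyConnectedIn H (level H 1)

/-- `H_3 = {∅} ∪ H(1) ∪ H(2) ∪ H(3)`. -/
def H3 {I : Type*} (H : Set (Finset I)) : Set (Finset I) :=
  {(∅ : Finset I)} ∪ level H 1 ∪ level H 2 ∪ level H 3

/-- A combinatorial strata structure with minimal set of indices the finite set `I ⊆ α`:
a family of subsets of `I` closed under taking subsets and containing all singletons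
`{i}`, `i ∈ I`. -/
def IsCSSOn {α : Type*} (I : Finset α) (H : Set (Finset α)) : Prop :=
  (∀ J ∈ H, J ⊆ I) ∧ (∀ J ∈ H, ∀ J' : Finset α, J' ⊆ J → J' ∈ H) ∧
    ∀ i ∈ I, ({i} : Finset α) ∈ H

section Paths

variable {β : Type*} [DecidableEq β] {H H' A : Set (Finset β)} {k : ℕ}
  {γ δ ρ σ σ' : List (Finset β)} {J X Y : Finset β}

theorem IsKPath.ne_nil (h : IsKPath H k γ) : γ ≠ [] := h.1

theorem IsKPath.mem_level (h : IsKPath H k γ) : ∀ J ∈ γ, J ∈ level H k := h.2.1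

theorem IsKPath.isChain (h : IsKPath H k γ) :
    γ.IsChain (fun J J' => J ∪ J' ∈ level H (k + 1)) := h.2.2

theorem isKPath_singleton (h : J ∈ level H k) : IsKPath H k [J] :=
  ⟨List.cons_ne_nil _ _, by simpa using h, List.isChain_singleton _⟩

theorem IsKPath.append (h₁ : IsKPath H k γ) (h₂ : IsKPath H k δ)
    (h : ∀ X ∈ γ.getLast?, ∀ Y ∈ δ.head?, X ∪ Y ∈ level H (k + 1)) :
    IsKPath H k (γ ++ δ) :=
  ⟨by simp [h₁.ne_nil], fun J hJ => (List.mem_append.mp hJ).elim (h₁.mem_level J)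
    (h₂.mem_level J), h₁.isChain.append h₂.isChain h⟩

theorem IsKPath.concat (h : IsKPath H k γ) (hX : γ.getLast? = some X) (hY : Y ∈ level H k)
    (hXY : X ∪ Y ∈ level H (k + 1)) : IsKPath H k (γ ++ [Y]) :=
  h.append (isKPath_singleton hY) fun X' hX' Y' hY' => by
    obtain rfl : X = X' := by rwa [hX, Option.mem_some_iff] at hX'
    obtain rfl : Y = Y' := by rwa [List.head?_singleton, Option.mem_some_iff] at hY'
    exact hXY

theorem IsKPath.infix (h : IsKPath H k γ) (hδ : δ <:+: γ) (hne : δ ≠ []) :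
    IsKPath H k δ :=
  ⟨hne, fun J hJ => h.mem_level J (hδ.subset hJ), h.isChain.infix hδ⟩

theorem IsKPath.union_mem_of_append (h : IsKPath H k (γ ++ δ)) (hX : X ∈ γ.getLast?)
    (hY : Y ∈ δ.head?) : X ∪ Y ∈ level H (k + 1) :=
  (List.isChain_append.mp h.isChain).2.2 X hX Y hY

theorem IsKPath.reverse (h : IsKPath H k γ) : IsKPath H k γ.reverse :=
  ⟨by simpa using h.ne_nil, fun J hJ => h.mem_level J (List.mem_reverse.mp hJ),
    List.isChain_reverse.mpr (h.isChain.imp fun J J' hJJ' => by rwa [Finset.union_comm])⟩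

theorem IsKPath.mono (h : IsKPath H k γ) (hk : level H k ⊆ level H' k)
    (hk₁ : level H (k + 1) ⊆ level H' (k + 1)) : IsKPath H' k γ :=
  ⟨h.ne_nil, fun J hJ => hk (h.mem_level J hJ), h.isChain.imp fun _ _ hJJ' => hk₁ hJJ'⟩

theorem IsKPath.append_of_getLast? (h₁ : IsKPath H k γ) (h₂ : IsKPath H k (J :: δ))
    (hJ : γ.getLast? = some J) : IsKPath H k (γ ++ δ) := by
  rcases eq_or_ne δ [] with rfl | hδ
  · simpa using h₁
  refine h₁.append (h₂.infix (List.suffix_cons J δ).isInfix hδ) fun X hX Y hY => ?_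
  rw [hJ, Option.mem_some_iff] at hX
  subst hX
  exact List.isChain_cons.mp h₂.isChain |>.1 Y hY

theorem IsKPath.replace (h : IsKPath H k (δ ++ σ ++ ρ)) (hσ' : IsKPath H k σ')
    (hh : σ'.head? = σ.head?) (hl : σ'.getLast? = σ.getLast?) :
    IsKPath H k (δ ++ σ' ++ ρ) := by
  have hσ : σ ≠ [] := by
    rintro rfl
    exact hσ'.ne_nil (List.head?_eq_none_iff.mp hh)
  have hc := h.isChain
  rw [List.append_assoc, List.isChain_append, List.isChain_append] at hc
  obtain ⟨hδ, ⟨-, hρ, hσρ⟩, hδσρ⟩ := hc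
  have hc' : (δ ++ σ' ++ ρ).IsChain (fun J J' => J ∪ J' ∈ level H (k + 1)) := by
    rw [List.append_assoc, List.isChain_append, List.isChain_append]
    refine ⟨hδ, ⟨hσ'.isChain, hρ, hl ▸ hσρ⟩, ?_⟩
    rwa [List.head?_append_of_ne_nil _ hσ'.ne_nil, hh,
      ← List.head?_append_of_ne_nil _ hσ]
  refine ⟨by simp [hσ'.ne_nil], fun J hJ => ?_, hc'⟩
  simp only [List.mem_append] at hJ
  rcases hJ with (hJ | hJ) | hJ
  · exact h.mem_level J (by simp [hJ])
  · exact hσ'.mem_level J hJ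
  · exact h.mem_level J (by simp [hJ])

theorem IsKPath.cons_singleton (hlow : IsLowerSet H) {x y : β}
    (h : IsKPath H 1 ({y} :: γ)) (hxy : {x, y} ∈ level H 2) :
    IsKPath H 1 ({x} :: {y} :: γ) := by
  have hx : ({x} : Finset β) ∈ level H 1 :=
    ⟨hlow (Finset.singleton_subset_iff.mpr (Finset.mem_insert_self x {y})) hxy.1,
      Finset.card_singleton x⟩
  refine ⟨List.cons_ne_nil _ _, ?_, List.isChain_cons_cons.mpr ⟨?_, h.isChain⟩⟩
  · rintro J (_ | ⟨_, hJ⟩)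
    · exact hx
    · exact h.mem_level J hJ
  · rwa [← Finset.insert_eq]

end Paths

section Homotopy

variable {β : Type*} [DecidableEq β] {H A : Set (Finset β)}
  {γ γ' γ'' δ ρ σ σ' : List (Finset β)}

theorem ElemPairCore.eq_or_ends_eq (h : ElemPairCore H σ σ') :
    σ = σ' ∨ σ ≠ [] ∧ σ' ≠ [] ∧ σ.head? = σ'.head? ∧ σ.getLast? = σ'.getLast? := by
  rcases h with rfl | ⟨x, y, rfl, rfl⟩ | ⟨x, y, z, rfl, rfl, -⟩ <;> simp

theorem ElemPair.symm (h : ElemPair H σ σ') : ElemPair H σ' σ := Or.symm h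

theorem ElemPair.eq_or_ends_eq (h : ElemPair H σ σ') :
    σ = σ' ∨ σ ≠ [] ∧ σ' ≠ [] ∧ σ.head? = σ'.head? ∧ σ.getLast? = σ'.getLast? := by
  rcases h with h | h
  · exact h.eq_or_ends_eq
  · rcases h.eq_or_ends_eq with h | ⟨h₁, h₂, h₃, h₄⟩
    · exact Or.inl h.symm
    · exact Or.inr ⟨h₂, h₁, h₃.symm, h₄.symm⟩

theorem ElemHomotopy.symm (h : ElemHomotopy H γ γ') : ElemHomotopy H γ' γ := by
  obtain ⟨δ, ε₁, ε₂, ρ, hp, rfl, rfl⟩ := h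
  exact ⟨δ, ε₂, ε₁, ρ, hp.symm, rfl, rfl⟩

theorem ElemHomotopy.ends_eq (h : ElemHomotopy H γ γ') :
    γ.head? = γ'.head? ∧ γ.getLast? = γ'.getLast? := by
  obtain ⟨δ, ε₁, ε₂, ρ, hp, rfl, rfl⟩ := h
  rcases hp.eq_or_ends_eq with rfl | ⟨h₁, h₂, hh, hl⟩
  · exact ⟨rfl, rfl⟩
  simp [List.head?_append, List.getLast?_append, hh, hl]

theorem HomotopicIn.refl (h : IsKPath H 1 γ) (hA : ∀ J ∈ γ, J ∈ A) :
    HomotopicIn H A γ γ :=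
  ⟨⟨h, hA⟩, .refl⟩

theorem HomotopicIn.trans (h : HomotopicIn H A γ γ') (h' : HomotopicIn H A γ' γ'') :
    HomotopicIn H A γ γ'' :=
  ⟨h.1, h.2.trans h'.2⟩

theorem HomotopicIn.valid_right (h : HomotopicIn H A γ γ') :
    IsKPath H 1 γ' ∧ ∀ J ∈ γ', J ∈ A := by
  obtain ⟨hγ, hr⟩ := h
  induction hr with
  | refl => exact hγ
  | tail _ hstep _ => exact hstep.2

theorem HomotopicIn.symm (h : HomotopicIn H A γ γ') : HomotopicIn H A γ' γ := by
  obtain ⟨hγ, hr⟩ := h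
  refine ⟨HomotopicIn.valid_right ⟨hγ, hr⟩, ?_⟩
  induction hr with
  | refl => exact .refl
  | tail hr hstep ih =>
    exact .head ⟨hstep.1.symm, HomotopicIn.valid_right ⟨hγ, hr⟩⟩ ih

theorem HomotopicIn.ends_eq (h : HomotopicIn H A γ γ') :
    γ.head? = γ'.head? ∧ γ.getLast? = γ'.getLast? := by
  obtain ⟨-, hr⟩ := h
  induction hr with
  | refl => exact ⟨rfl, rfl⟩
  | tail _ hstep ih =>
    exact ⟨ih.1.trans hstep.1.ends_eq.1, ih.2.trans hstep.1.ends_eq.2⟩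

theorem HomotopicIn.of_elemPair (hp : ElemPair H σ σ') (h : IsKPath H 1 σ)
    (hA : ∀ J ∈ σ, J ∈ A) (h' : IsKPath H 1 σ') (hA' : ∀ J ∈ σ', J ∈ A) :
    HomotopicIn H A σ σ' :=
  ⟨⟨h, hA⟩, .single ⟨⟨[], σ, σ', [], hp, by simp, by simp⟩, h', hA'⟩⟩

theorem HomotopicIn.congr (h : HomotopicIn H A σ σ') (hv : IsKPath H 1 (δ ++ σ ++ ρ))
    (hA : ∀ J ∈ δ ++ σ ++ ρ, J ∈ A) :
    HomotopicIn H A (δ ++ σ ++ ρ) (δ ++ σ' ++ ρ) := by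
  obtain ⟨hσ, hr⟩ := h
  refine ⟨⟨hv, hA⟩, ?_⟩
  have hmem : ∀ g : List (Finset β), (∀ J ∈ g, J ∈ A) → ∀ J ∈ δ ++ g ++ ρ, J ∈ A := by
    intro g hg J hJ
    simp only [List.mem_append] at hJ hA
    rcases hJ with (hJ | hJ) | hJ
    · exact hA J (.inl (.inl hJ))
    · exact hg J hJ
    · exact hA J (.inr hJ)
  induction hr with
  | refl => exact .refl
  | @tail g g' hr hstep ih =>
    have hv' := (HomotopicIn.valid_right ⟨⟨hv, hA⟩, ih⟩).1
    obtain ⟨ε, ε₁, ε₂, ε', hp, rfl, rfl⟩ := hstep.1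
    refine ih.tail ⟨⟨δ ++ ε, ε₁, ε₂, ε' ++ ρ, hp, by simp, by simp⟩, ?_, hmem _ hstep.2.2⟩
    have hends := hstep.1.ends_eq
    exact hv'.replace hstep.2.1 hends.1.symm hends.2.symm

end Homotopy

section LowerSet

variable {β : Type*} [DecidableEq β] {H A : Set (Finset β)} {k : ℕ} {x y z : β}

theorem ne_of_card_insert_pair_eq_three (h : (insert z {x, y} : Finset β).card = 3) :
    x ≠ y ∧ x ≠ z ∧ y ≠ z := by
  have h₂ : ∀ a b : β, ({a, b} : Finset β).card ≤ 2 := fun a b => Finset.card_le_two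
  refine ⟨?_, ?_, ?_⟩ <;> rintro rfl <;> simp at h
  · have := h₂ z x; omega
  · have := h₂ x y; omega
  · have := h₂ x y; omega

theorem homotopicIn_spur (hlow : IsLowerSet H) (h : {x, y} ∈ level H 2) :
    HomotopicIn H (level H 1) [{x}] [{x}, {y}, {x}] := by
  have hyx : ({y, x} : Finset β) ∈ level H 2 := by rwa [Finset.pair_comm]
  have hx : ({x} : Finset β) ∈ level H 1 :=
    ⟨hlow (by simp) h.1, Finset.card_singleton x⟩
  have hpath := ((isKPath_singleton hx).cons_singleton hlow hyx).cons_singleton hlow h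
  exact .of_elemPair (Or.inr (Or.inr (Or.inl ⟨x, y, rfl, rfl⟩))) (isKPath_singleton hx)
    (isKPath_singleton hx).mem_level hpath hpath.mem_level

theorem homotopicIn_triangle (hlow : IsLowerSet H) (h : insert z {x, y} ∈ level H 3) :
    HomotopicIn H (level H 1) [{x}, {y}] [{x}, {z}, {y}] := by
  obtain ⟨hxy, hxz, hyz⟩ := ne_of_card_insert_pair_eq_three h.2
  have edge : ∀ {a b : β}, a ≠ b → a ∈ (insert z {x, y} : Finset β) →
      b ∈ (insert z {x, y} : Finset β) →
      ({a, b} : Finset β) ∈ level H 2 := fun hab ha hb =>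
    ⟨hlow (Finset.insert_subset_iff.mpr ⟨ha, by simpa using hb⟩) h.1,
      Finset.card_pair hab⟩
  have hy : ({y} : Finset β) ∈ level H 1 := ⟨hlow (by simp) h.1, Finset.card_singleton y⟩
  have hxy₂ := edge hxy (by simp) (by simp)
  have hxz₂ := edge hxz (by simp) (by simp)
  have hzy₂ := edge hyz.symm (by simp) (by simp)
  have hside : IsKPath H 2 [{x, z}, {z, y}] := by
    refine ⟨List.cons_ne_nil _ _, ?_, List.isChain_pair.mpr ?_⟩
    · simp only [List.mem_cons, List.not_mem_nil, or_false]
      rintro J (rfl | rfl) <;> assumption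
    · convert h using 1
      ext; simp only [Finset.mem_union, Finset.mem_insert, Finset.mem_singleton]; tauto
  have hpath₁ := (isKPath_singleton hy).cons_singleton hlow hxy₂
  have hpath₂ := ((isKPath_singleton hy).cons_singleton hlow hzy₂).cons_singleton hlow hxz₂
  exact .of_elemPair (Or.inl (Or.inr (Or.inr ⟨x, y, z, rfl, rfl, hside⟩))) hpath₁
    hpath₁.mem_level hpath₂ hpath₂.mem_level

theorem kConnectedIn_of_forall_joins {O : Finset β}
    (h : ∀ X ∈ A, ∃ γ, IsKPath H k γ ∧ Joins γ O X ∧ ∀ K ∈ γ, K ∈ A) :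
    KConnectedIn H k A := by
  intro X hX Y hY
  obtain ⟨γ, hγ, ⟨hγO, hγX⟩, hγA⟩ := h X hX
  obtain ⟨δ, hδ, ⟨hδO, hδY⟩, hδA⟩ := h Y hY
  obtain ⟨δ, rfl⟩ := List.head?_eq_some_iff.mp hδO
  refine ⟨γ.reverse ++ δ, hγ.reverse.append_of_getLast? hδ (by simpa using hγO),
    ⟨by simp [List.head?_append, hγX], ?_⟩, ?_⟩
  · rcases eq_or_ne δ [] with rfl | hne
    · simpa [hγO] using hδY
    · obtain ⟨d, δ, rfl⟩ := List.exists_cons_of_ne_nil hne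
      simpa [List.getLast?_append] using hδY
  · intro K hK
    rcases List.mem_append.mp hK with hK | hK
    · exact hγA K (List.mem_reverse.mp hK)
    · exact hδA K (List.mem_cons_of_mem _ hK)

end LowerSet

section Blowup

variable {α : Type*} {H : Set (Finset α)} {J₀ J K X Y Z : Finset α} {infty a b x y z : α}
  {k : ℕ} {γ γ' σ σ' τ : List (Finset α)}

theorem mem_level : K ∈ level H k ↔ K ∈ H ∧ K.card = k := Iff.rfl

theorem mem_H3_iff (h : ∅ ∈ H) : K ∈ H3 H ↔ K ∈ H ∧ K.card ≤ 3 := by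
  simp only [H3, level, Set.mem_union, Set.mem_singleton_iff, Set.mem_ofPred_eq]
  constructor
  · rintro (((rfl | h) | h) | h)
    · simpa using h
    all_goals exact ⟨h.1, by omega⟩
  · rintro ⟨hK, hcard⟩
    rcases (by omega : K.card = 0 ∨ K.card = 1 ∨ K.card = 2 ∨ K.card = 3) with h | h | h | h
    · exact .inl (.inl (.inl (Finset.card_eq_zero.mp h)))
    · exact .inl (.inl (.inr ⟨hK, h⟩))
    · exact .inl (.inr ⟨hK, h⟩)
    · exact .inr ⟨hK, h⟩

structure IsBlowupCenter (H : Set (Finset α)) (J₀ : Finset α) (infty : α) : Prop where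
  isLowerSet : IsLowerSet H
  center_mem : J₀ ∈ level H 3
  infty_notMem : ∀ J ∈ H, infty ∉ J

theorem IsBlowupCenter.empty_mem (hc : IsBlowupCenter H J₀ infty) : ∅ ∈ H :=
  hc.isLowerSet (Finset.empty_subset _) hc.center_mem.1

theorem IsBlowupCenter.hub_mem_level (hc : IsBlowupCenter H J₀ infty) (ha : a ∈ J₀) :
    {a} ∈ level H 1 :=
  ⟨hc.isLowerSet (Finset.singleton_subset_iff.mpr ha) hc.center_mem.1, Finset.card_singleton a⟩

variable [DecidableEq α]

def blowup (H : Set (Finset α)) (J₀ : Finset α) (infty : α) : Set (Finset α) :=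
  (H3 H \ {J₀}) ∪ {K | ∃ J ∈ H, J.card ≤ 2 ∧ J ∪ J₀ ∈ H ∧ K = insert infty J}

/- A path of the blow-up from `X` to `Y` is put in the normal form
`inftyCap infty X ++ τ ++ inftyCap infty Y`, where `τ` is a path of `H` from `retract infty a X`
to `retract infty a Y`. -/
def retract (infty a : α) (X : Finset α) : Finset α := if X = {infty} then {a} else X

def inftyCap (infty : α) (X : Finset α) : List (Finset α) := if X = {infty} then [{infty}] else []

local notation "H′" => blowup H J₀ infty

namespace IsBlowupCenter

theorem mem_blowup_of_notMem (hc : IsBlowupCenter H J₀ infty) (hK : infty ∉ K) :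
    K ∈ H′ ↔ K ∈ H ∧ K.card ≤ 3 ∧ K ≠ J₀ := by
  simp only [blowup, Set.mem_union, Set.mem_sdiff, mem_H3_iff hc.empty_mem,
    Set.mem_singleton_iff, Set.mem_ofPred_eq]
  constructor
  · rintro (⟨h, hne⟩ | ⟨J, -, -, -, rfl⟩)
    · exact ⟨h.1, h.2, hne⟩
    · exact absurd (Finset.mem_insert_self _ _) hK
  · rintro ⟨h, hcard, hne⟩
    exact .inl ⟨⟨h, hcard⟩, hne⟩

theorem insert_mem_blowup (hc : IsBlowupCenter H J₀ infty) (hJ : infty ∉ J) :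
    insert infty J ∈ H′ ↔ J.card ≤ 2 ∧ J ∪ J₀ ∈ H := by
  simp only [blowup, Set.mem_union, Set.mem_sdiff, mem_H3_iff hc.empty_mem,
    Set.mem_singleton_iff, Set.mem_ofPred_eq]
  constructor
  · rintro (⟨⟨h, -⟩, -⟩ | ⟨J', hJ', hcard, hJ'J₀, heq⟩)
    · exact absurd (Finset.mem_insert_self _ _) (hc.infty_notMem _ h)
    · have : J = J' := by
        rw [← Finset.erase_insert hJ, heq, Finset.erase_insert (hc.infty_notMem _ hJ')]
      subst this
      exact ⟨hcard, hJ'J₀⟩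
  · rintro ⟨hcard, hJJ₀⟩
    exact .inr ⟨J, hc.isLowerSet Finset.subset_union_left hJJ₀, hcard, hJJ₀, rfl⟩

theorem isLowerSet_blowup (hc : IsBlowupCenter H J₀ infty) : IsLowerSet H′ := by
  intro K K' hK'K hK
  have hcenter := hc.center_mem.2
  by_cases hKinf : infty ∈ K
  · rw [← Finset.insert_erase hKinf, hc.insert_mem_blowup (Finset.notMem_erase _ _)] at hK
    obtain ⟨hcard, hKJ₀⟩ := hK
    have hsub : K'.erase infty ⊆ K.erase infty := Finset.erase_subset_erase _ hK'K
    by_cases hK'inf : infty ∈ K'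
    · rw [← Finset.insert_erase hK'inf, hc.insert_mem_blowup (Finset.notMem_erase _ _)]
      exact ⟨(Finset.card_le_card hsub).trans hcard,
        hc.isLowerSet (Finset.union_subset_union_left hsub) hKJ₀⟩
    · rw [Finset.erase_eq_of_notMem hK'inf] at hsub
      have hcard' := (Finset.card_le_card hsub).trans hcard
      refine (hc.mem_blowup_of_notMem hK'inf).mpr
        ⟨hc.isLowerSet (hsub.trans Finset.subset_union_left) hKJ₀, by omega, ?_⟩
      rintro rfl
      omega
  · have hK'inf : infty ∉ K' := fun h => hKinf (hK'K h)
    obtain ⟨hKH, hcard, hne⟩ := (hc.mem_blowup_of_notMem hKinf).mp hK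
    refine (hc.mem_blowup_of_notMem hK'inf).mpr
      ⟨hc.isLowerSet hK'K hKH, (Finset.card_le_card hK'K).trans hcard, ?_⟩
    rintro rfl
    exact hne (Finset.eq_of_subset_of_card_le hK'K (by omega)).symm

theorem mem_level_blowup_of_notMem (hc : IsBlowupCenter H J₀ infty) (hK : infty ∉ K)
    (hKJ₀ : K ≠ J₀) (hk : k ≤ 3) : K ∈ level H′ k ↔ K ∈ level H k := by
  simp only [mem_level, hc.mem_blowup_of_notMem hK]
  constructor
  · rintro ⟨⟨h, -, -⟩, hcard⟩
    exact ⟨h, hcard⟩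
  · rintro ⟨h, hcard⟩
    exact ⟨⟨h, by omega, hKJ₀⟩, hcard⟩

theorem level_subset_level_blowup (hc : IsBlowupCenter H J₀ infty) (hk : k ≤ 2) :
    level H k ⊆ level H′ k := by
  intro K hK
  refine (hc.mem_level_blowup_of_notMem (hc.infty_notMem _ hK.1) ?_ (by omega)).mpr hK
  rintro rfl
  have := hc.center_mem.2
  have := hK.2
  omega

theorem insert_mem_level_blowup (hc : IsBlowupCenter H J₀ infty) (hJ : J ∪ J₀ ∈ H)
    (hk : J.card ≤ 2) : insert infty J ∈ level H′ (J.card + 1) := by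
  have hJinf := hc.infty_notMem _ (hc.isLowerSet Finset.subset_union_left hJ)
  exact ⟨(hc.insert_mem_blowup hJinf).mpr ⟨hk, hJ⟩, Finset.card_insert_of_notMem hJinf⟩

theorem union_center_mem_of_insert_mem (hc : IsBlowupCenter H J₀ infty) (hJ : infty ∉ J)
    (h : insert infty J ∈ H′) : J ∪ J₀ ∈ H :=
  ((hc.insert_mem_blowup hJ).mp h).2

theorem singleton_infty_mem_level_blowup (hc : IsBlowupCenter H J₀ infty) :
    {infty} ∈ level H′ 1 := by
  simpa using hc.insert_mem_level_blowup (J := ∅) (by simpa using hc.center_mem.1) (by simp)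

theorem mem_level_one_blowup_iff (hc : IsBlowupCenter H J₀ infty) :
    K ∈ level H′ 1 ↔ K ∈ level H 1 ∨ K = {infty} := by
  constructor
  · intro hK
    by_cases hKinf : infty ∈ K
    · obtain ⟨b, rfl⟩ := Finset.card_eq_one.mp hK.2
      exact .inr (by rw [Finset.mem_singleton.mp hKinf])
    · refine .inl ((hc.mem_level_blowup_of_notMem hKinf ?_ (by omega)).mp hK)
      rintro rfl
      have := hc.center_mem.2
      have := hK.2
      omega
  · rintro (hK | rfl)
    · exact hc.level_subset_level_blowup (by omega) hK
    · exact hc.singleton_infty_mem_level_blowup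

theorem isCSSOn_blowup (hc : IsBlowupCenter H J₀ infty) {I : Finset α} (hH : IsCSSOn I H) :
    IsCSSOn (insert infty I) H′ := by
  refine ⟨fun K hK => ?_, fun K hK K' hK' => hc.isLowerSet_blowup hK' hK, fun i hi => ?_⟩
  · by_cases hKinf : infty ∈ K
    · rw [← Finset.insert_erase hKinf] at hK ⊢
      have := hc.union_center_mem_of_insert_mem (Finset.notMem_erase _ _) hK
      exact Finset.insert_subset_insert _ (hH.1 _ (hc.isLowerSet Finset.subset_union_left this))
    · exact (hH.1 K ((hc.mem_blowup_of_notMem hKinf).mp hK).1).trans (Finset.subset_insert _ _)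
  · rcases Finset.mem_insert.mp hi with rfl | hi
    · exact hc.singleton_infty_mem_level_blowup.1
    · exact (hc.level_subset_level_blowup (k := 1) (by norm_num)
        ⟨hH.2.2 i hi, Finset.card_singleton i⟩).1


theorem isKPath_blowup (hc : IsBlowupCenter H J₀ infty) (h : IsKPath H 1 γ) :
    IsKPath H′ 1 γ :=
  h.mono (hc.level_subset_level_blowup (by norm_num)) (hc.level_subset_level_blowup le_rfl)

theorem insert_mem_level_three_blowup (hc : IsBlowupCenter H J₀ infty) (hxy : x ≠ y)
    (h : {x, y} ∪ J₀ ∈ H) : insert infty {x, y} ∈ level H′ 3 := by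
  simpa [Finset.card_pair hxy] using
    hc.insert_mem_level_blowup h (Finset.card_pair hxy).le

theorem homotopicIn_blowup_of_triangle_eq_center (hc : IsBlowupCenter H J₀ infty)
    (h : insert z {x, y} = J₀) :
    HomotopicIn H′ (level H′ 1) [{x}, {y}] [{x}, {z}, {y}] := by
  have hlow := hc.isLowerSet_blowup
  obtain ⟨hxy, hxz, hyz⟩ := ne_of_card_insert_pair_eq_three (h ▸ hc.center_mem.2)
  have face : ∀ {u v : α}, u ≠ v → u ∈ J₀ → v ∈ J₀ →
      insert infty {u, v} ∈ level H′ 3 := fun huv hu hv =>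
    hc.insert_mem_level_three_blowup huv (by
      rw [Finset.union_eq_right.mpr (Finset.insert_subset hu (by simpa using hv))]
      exact hc.center_mem.1)
  have hx : x ∈ J₀ := h ▸ by simp
  have hy : y ∈ J₀ := h ▸ by simp
  have hz : z ∈ J₀ := h ▸ by simp
  have step₁ := homotopicIn_triangle hlow (face hxy hx hy)
  have step₂ : HomotopicIn H′ (level H′ 1) [{x}, {infty}, {y}] [{x}, {z}, {infty}, {y}] := by
    have hface : (insert z {x, infty} : Finset α) = insert infty {x, z} := by
      ext; simp only [Finset.mem_insert, Finset.mem_singleton]; tauto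
    exact (homotopicIn_triangle hlow (hface ▸ face hxz hx hz)).congr (δ := []) (ρ := [{y}])
      step₁.valid_right.1 step₁.valid_right.2
  have step₃ : HomotopicIn H′ (level H′ 1) [{x}, {z}, {infty}, {y}] [{x}, {z}, {y}] :=
    (homotopicIn_triangle hlow (face hyz.symm hz hy)).symm.congr (δ := [{x}]) (ρ := [])
      step₂.valid_right.1 step₂.valid_right.2
  exact step₁.trans (step₂.trans step₃)

theorem homotopicIn_blowup_of_elemPairCore (hc : IsBlowupCenter H J₀ infty)
    (hp : ElemPairCore H σ σ') (h : IsKPath H 1 σ) :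
    HomotopicIn H′ (level H′ 1) σ σ' := by
  have hlow := hc.isLowerSet_blowup
  rcases hp with rfl | ⟨x, y, rfl, rfl⟩ | ⟨x, y, z, rfl, rfl, hside⟩
  · exact .refl (hc.isKPath_blowup h) (hc.isKPath_blowup h).mem_level
  · have hxy : {x, y} ∈ level H 2 := by
      simpa [← Finset.insert_eq] using (List.isChain_cons_cons.mp h.isChain).1
    exact (homotopicIn_spur hlow (hc.level_subset_level_blowup (by norm_num) hxy)).symm
  · have hT : insert z {x, y} ∈ level H 3 := by
      convert List.isChain_pair.mp hside.isChain using 2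
      ext; simp only [Finset.mem_union, Finset.mem_insert, Finset.mem_singleton]; tauto
    by_cases hT₀ : insert z {x, y} = J₀
    · exact hc.homotopicIn_blowup_of_triangle_eq_center hT₀
    · exact homotopicIn_triangle hlow
        ((hc.mem_level_blowup_of_notMem (hc.infty_notMem _ hT.1) hT₀ le_rfl).mpr hT)

theorem homotopicIn_blowup (hc : IsBlowupCenter H J₀ infty)
    (h : HomotopicIn H (level H 1) γ γ') :
    HomotopicIn H′ (level H′ 1) γ γ' := by
  obtain ⟨⟨hγ, hγA⟩, hr⟩ := h
  induction hr with
  | refl => exact .refl (hc.isKPath_blowup hγ) (hc.isKPath_blowup hγ).mem_level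
  | @tail g g' hr hstep ih =>
    have hg := (HomotopicIn.valid_right ⟨⟨hγ, hγA⟩, hr⟩).1
    obtain ⟨⟨δ, ε, ε', ρ, hp, rfl, rfl⟩, hg', -⟩ := hstep
    have hgH := hc.isKPath_blowup hg
    refine ih.trans ?_
    rcases hp.eq_or_ends_eq with rfl | ⟨hne, hne', -, -⟩
    · exact .refl hgH hgH.mem_level
    have hε := hg.infix ⟨δ, ρ, rfl⟩ hne
    have hε' := hg'.infix ⟨δ, ρ, rfl⟩ hne'
    have hloc := hp.elim (hc.homotopicIn_blowup_of_elemPairCore · hε)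
      fun hp => (hc.homotopicIn_blowup_of_elemPairCore hp hε').symm
    exact hloc.congr hgH hgH.mem_level

theorem hub_infty_mem_level (hc : IsBlowupCenter H J₀ infty) (ha : a ∈ J₀) :
    {a, infty} ∈ level H′ 2 := by
  rw [Finset.pair_comm]
  exact hc.insert_mem_level_blowup (J := {a})
    (by rw [Finset.union_eq_right.mpr (Finset.singleton_subset_iff.mpr ha)]; exact hc.center_mem.1)
    (by simp)

theorem union_center_mem_of_union_infty_mem (hc : IsBlowupCenter H J₀ infty)
    (hb : {b} ∈ H) (h : {b} ∪ {infty} ∈ H′) : {b} ∪ J₀ ∈ H := by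
  rw [Finset.union_comm, ← Finset.insert_eq] at h
  exact hc.union_center_mem_of_insert_mem (hc.infty_notMem _ hb) h

theorem exists_homotopicIn_append_infty (hc : IsBlowupCenter H J₀ infty) (ha : a ∈ J₀)
    (hτ : IsKPath H 1 τ) (hv : IsKPath H′ 1 (τ ++ [{infty}])) :
    ∃ τ', IsKPath H 1 τ' ∧ τ'.head? = τ.head? ∧ τ'.getLast? = some {a} ∧
      HomotopicIn H′ (level H′ 1) (τ ++ [{infty}]) (τ' ++ [{infty}]) := by
  obtain ⟨τ₀, X, rfl⟩ : ∃ τ₀ X, τ = τ₀ ++ [X] :=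
    ⟨_, _, (List.dropLast_append_getLast hτ.ne_nil).symm⟩
  obtain ⟨b, rfl⟩ := Finset.card_eq_one.mp (hτ.mem_level X (by simp)).2
  have hb := (hτ.mem_level {b} (by simp)).1
  have hbJ₀ := hc.union_center_mem_of_union_infty_mem hb
    (hv.union_mem_of_append (by simp) (by simp)).1
  rcases eq_or_ne b a with rfl | hba
  · exact ⟨_, hτ, rfl, by simp, .refl hv hv.mem_level⟩
  have habJ₀ : {a, b} ∪ J₀ ∈ H := by
    rwa [Finset.insert_union, Finset.insert_eq_of_mem (Finset.mem_union_right _ ha)]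
  have hab : ({a, b} : Finset α) ∈ level H 2 :=
    ⟨hc.isLowerSet Finset.subset_union_left habJ₀, Finset.card_pair hba.symm⟩
  refine ⟨τ₀ ++ [{b}, {a}], ?_, by simp [List.head?_append], by simp, ?_⟩
  · simpa using hτ.concat (X := {b}) (by simp) (hc.hub_mem_level ha)
      (by rwa [← Finset.insert_eq, Finset.pair_comm])
  · have hface : (insert a {b, infty} : Finset α) = insert infty {a, b} := by
      ext; simp only [Finset.mem_insert, Finset.mem_singleton]; tauto
    have htri := homotopicIn_triangle hc.isLowerSet_blowup
      (hface ▸ hc.insert_mem_level_three_blowup hba.symm habJ₀)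
    simpa using htri.congr (δ := τ₀) (ρ := []) (by simpa using hv) (by simpa using hv.mem_level)

theorem exists_homotopicIn_infty_append (hc : IsBlowupCenter H J₀ infty) (ha : a ∈ J₀)
    (hτ : IsKPath H 1 τ) (hlast : τ.getLast? = some {a})
    (hv : IsKPath H′ 1 (τ ++ [{infty}, Z])) :
    ∃ τ', IsKPath H 1 τ' ∧ τ'.head? = τ.head? ∧ τ'.getLast? = some Z ∧
      HomotopicIn H′ (level H′ 1) (τ ++ [{infty}, Z]) τ' := by
  obtain ⟨τ₀, rfl⟩ := List.getLast?_eq_some_iff.mp hlast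
  have hedge : {infty} ∪ Z ∈ level H′ 2 := by
    have hv' : IsKPath H′ 1 (τ₀ ++ [{a}, {infty}] ++ [Z]) := by simpa using hv
    exact hv'.union_mem_of_append (by simp) (by simp)
  have hZ : Z ∈ level H 1 := by
    refine (hc.mem_level_one_blowup_iff.mp (hv.mem_level Z (by simp))).resolve_right ?_
    rintro rfl
    simpa using hedge.2
  obtain ⟨c, rfl⟩ := Finset.card_eq_one.mp hZ.2
  have hcJ₀ := hc.union_center_mem_of_union_infty_mem hZ.1
    (by rw [Finset.union_comm]; exact hedge.1)
  have hlow := hc.isLowerSet_blowup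
  rcases eq_or_ne c a with rfl | hca
  · refine ⟨_, hτ, rfl, by simp, ?_⟩
    have hspur := homotopicIn_spur hlow (hc.hub_infty_mem_level ha)
    simpa using hspur.symm.congr (δ := τ₀) (ρ := []) (by simpa using hv)
      (by simpa using hv.mem_level)
  have hacJ₀ : {a, c} ∪ J₀ ∈ H := by
    rwa [Finset.insert_union, Finset.insert_eq_of_mem (Finset.mem_union_right _ ha)]
  have hac : ({a, c} : Finset α) ∈ level H 2 :=
    ⟨hc.isLowerSet Finset.subset_union_left hacJ₀, Finset.card_pair hca.symm⟩
  refine ⟨τ₀ ++ [{a}, {c}], ?_, by simp [List.head?_append], by simp, ?_⟩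
  · simpa using hτ.concat (X := {a}) (by simp) hZ (by rwa [← Finset.insert_eq])
  · have htri := homotopicIn_triangle hlow (hc.insert_mem_level_three_blowup hca.symm hacJ₀)
    simpa using htri.symm.congr (δ := τ₀) (ρ := []) (by simpa using hv)
      (by simpa using hv.mem_level)

theorem exists_homotopicIn_append (hc : IsBlowupCenter H J₀ infty) (ha : a ∈ J₀)
    (hτ : IsKPath H 1 τ) (hlast : τ.getLast? = some (retract infty a Y))
    (hv : IsKPath H′ 1 (τ ++ inftyCap infty Y ++ [Z])) :
    ∃ τ', IsKPath H 1 τ' ∧ τ'.head? = τ.head? ∧ τ'.getLast? = some (retract infty a Z) ∧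
      HomotopicIn H′ (level H′ 1) (τ ++ inftyCap infty Y ++ [Z]) (τ' ++ inftyCap infty Z) := by
  by_cases hY : Y = {infty}
  · simp only [retract, inftyCap, hY, if_true] at hlast hv ⊢
    have hZ : Z ≠ {infty} := by
      rintro rfl
      simpa using (hv.union_mem_of_append (X := {infty}) (Y := {infty}) (by simp) (by simp)).2
    simpa [hZ] using hc.exists_homotopicIn_infty_append ha hτ hlast (by simpa using hv)
  simp only [retract, inftyCap, hY, if_false, List.append_nil] at hlast hv ⊢
  by_cases hZ : Z = {infty}
  · simpa [hZ] using hc.exists_homotopicIn_append_infty ha hτ (hZ ▸ hv)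
  simp only [hZ, if_false, List.append_nil]
  have hZH : Z ∈ level H 1 :=
    (hc.mem_level_one_blowup_iff.mp (hv.mem_level Z (by simp))).resolve_right hZ
  have hYH : Y ∈ level H 1 := hτ.mem_level Y (List.mem_of_getLast? hlast)
  have hYZ : Y ∪ Z ∈ level H 2 := by
    refine (hc.mem_level_blowup_of_notMem ?_ ?_ (by norm_num)).mp
      (hv.union_mem_of_append hlast (by simp))
    · simp [hc.infty_notMem _ hYH.1, hc.infty_notMem _ hZH.1]
    · rintro h
      have := Finset.card_union_le Y Z
      rw [h, hc.center_mem.2, hYH.2, hZH.2] at this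
      omega
  refine ⟨τ ++ [Z], ?_, List.head?_append_of_ne_nil _ hτ.ne_nil, by simp, ?_⟩
  · exact hτ.concat hlast hZH hYZ
  · exact .refl hv hv.mem_level

theorem exists_homotopicIn_normalForm (hc : IsBlowupCenter H J₀ infty) (ha : a ∈ J₀)
    (hγ : IsKPath H′ 1 γ) (hj : Joins γ X Y) :
    ∃ τ, IsKPath H 1 τ ∧ Joins τ (retract infty a X) (retract infty a Y) ∧
      HomotopicIn H′ (level H′ 1) γ (inftyCap infty X ++ τ ++ inftyCap infty Y) := by
  induction γ using List.reverseRecOn generalizing Y with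
  | nil => exact absurd rfl hγ.ne_nil
  | append_singleton σ Z ih =>
    rcases eq_or_ne σ [] with rfl | hσ
    · obtain ⟨hX, hY⟩ : X = Z ∧ Y = Z := by simpa [Joins, eq_comm] using hj
      rw [hX, hY]
      by_cases hZ : Z = {infty}
      · subst hZ
        refine ⟨[{a}], isKPath_singleton (hc.hub_mem_level ha), by simp [Joins, retract], ?_⟩
        have hedge : {infty, a} ∈ level H′ 2 := by
          rw [Finset.pair_comm]; exact hc.hub_infty_mem_level ha
        simpa [inftyCap] using homotopicIn_spur hc.isLowerSet_blowup hedge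
      · have hZH := (hc.mem_level_one_blowup_iff.mp (hγ.mem_level Z (by simp))).resolve_right hZ
        exact ⟨[Z], isKPath_singleton hZH, by simp [Joins, retract, hZ],
          by simpa [inftyCap, hZ] using HomotopicIn.refl hγ hγ.mem_level⟩
    obtain ⟨W, hW⟩ := Option.ne_none_iff_exists'.mp (mt List.getLast?_eq_none_iff.mp hσ)
    have hσX : σ.head? = some X := by rw [← hj.1, List.head?_append_of_ne_nil _ hσ]
    have hσv := hγ.infix (List.prefix_append σ [Z]).isInfix hσ
    obtain ⟨τ, hτ, ⟨hτX, hτW⟩, hστ⟩ := ih hσv ⟨hσX, hW⟩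
    have hext := hστ.congr (δ := []) (ρ := [Z]) (by simpa using hγ) (by simpa using hγ.mem_level)
    simp only [List.nil_append] at hext
    have hv := hext.valid_right.1
    obtain ⟨τ', hτ', hτ'X, hτ'Z, hττ'⟩ := hc.exists_homotopicIn_append ha hτ hτW
      (hv.infix (δ := τ ++ inftyCap infty W ++ [Z]) ⟨inftyCap infty X, [], by simp⟩ (by simp))
    have hY : Z = Y := by simpa using hj.2
    subst hY
    refine ⟨τ', hτ', ⟨hτ'X.trans hτX, hτ'Z⟩, hext.trans ?_⟩
    simpa using hττ'.congr (δ := inftyCap infty X) (ρ := []) (by simpa using hv)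
      (by simpa using hv.mem_level)

theorem oneConnected_blowup (hc : IsBlowupCenter H J₀ infty) (hcon : OneConnected H)
    (ha : a ∈ J₀) : OneConnected H′ := by
  refine kConnectedIn_of_forall_joins (O := {a}) fun X hX => ?_
  rcases hc.mem_level_one_blowup_iff.mp hX with hX | rfl
  · obtain ⟨γ, hγ, hj, -⟩ := hcon {a} (hc.hub_mem_level ha) X hX
    exact ⟨γ, hc.isKPath_blowup hγ, hj, (hc.isKPath_blowup hγ).mem_level⟩
  · have hpath := (isKPath_singleton hc.singleton_infty_mem_level_blowup).cons_singleton
      hc.isLowerSet_blowup (hc.hub_infty_mem_level ha)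
    exact ⟨_, hpath, ⟨rfl, rfl⟩, hpath.mem_level⟩

theorem simplyConnected_blowup (hc : IsBlowupCenter H J₀ infty) (hsc : SimplyConnected H)
    (ha : a ∈ J₀) : SimplyConnected H′ := by
  refine ⟨hc.oneConnected_blowup hsc.1 ha, fun γ γ' hγ hγ' _ _ hh hl => ?_⟩
  obtain ⟨X, hX⟩ := Option.ne_none_iff_exists'.mp (mt List.head?_eq_none_iff.mp hγ.ne_nil)
  obtain ⟨Y, hY⟩ := Option.ne_none_iff_exists'.mp (mt List.getLast?_eq_none_iff.mp hγ.ne_nil)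
  obtain ⟨τ, hτ, hτj, hγτ⟩ := hc.exists_homotopicIn_normalForm ha hγ ⟨hX, hY⟩
  obtain ⟨τ', hτ', hτj', hγτ'⟩ := hc.exists_homotopicIn_normalForm ha hγ' ⟨hh ▸ hX, hl ▸ hY⟩
  have hττ' := hsc.2 τ τ' hτ hτ' hτ.mem_level hτ'.mem_level (hτj.1.trans hτj'.1.symm)
    (hτj.2.trans hτj'.2.symm)
  have hlift := (hc.homotopicIn_blowup hττ').congr hγτ.valid_right.1 hγτ.valid_right.2
  exact hγτ.trans (hlift.trans hγτ'.symm)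

end IsBlowupCenter

end Blowup

theorem blowup_point_center_simplyConnected_general
    {α : Type*} [DecidableEq α] (I : Finset α) (infty : α)
    (hinfty : infty ∉ I) (H : Set (Finset α)) (hH : IsCSSOn I H)
    (hsc : SimplyConnected H) (i₁ i₂ i₃ : α)
    (hJ0 : ({i₁, i₂, i₃} : Finset α) ∈ level H 3) :
    IsCSSOn (insert infty I)
        ((H3 H \ {({i₁, i₂, i₃} : Finset α)}) ∪
          {K : Finset α | ∃ J ∈ H, J.card ≤ 2 ∧
            J ∪ ({i₁, i₂, i₃} : Finset α) ∈ H ∧ K = insert infty J}) ∧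
      SimplyConnected
        ((H3 H \ {({i₁, i₂, i₃} : Finset α)}) ∪
          {K : Finset α | ∃ J ∈ H, J.card ≤ 2 ∧
            J ∪ ({i₁, i₂, i₃} : Finset α) ∈ H ∧ K = insert infty J}) := by
  have hc : IsBlowupCenter H {i₁, i₂, i₃} infty :=
    ⟨fun _ _ hJ'J hJ => hH.2.1 _ hJ _ hJ'J, hJ0, fun _ hJ hinf => hinfty (hH.1 _ hJ hinf)⟩
  exact ⟨hc.isCSSOn_blowup hH, hc.simplyConnected_blowup hsc (a := i₁) (by simp)⟩

/-- (Blow-up of a three-codimensional stratum.) If `H` is simply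
connected, `∞ ∉ I`, `J₀ = {i₁,i₂,i₃} ∈ H(3)` and
`B = {J ∈ H : #J ≤ 2 and J ∪ J₀ ∈ H}`, then
`H' = (H_3 \ {J₀}) ∪ {J ∪ {∞} : J ∈ B}` is a simply connected combinatorial strata
structure with minimal set of indices `I ∪ {∞}`. -/
theorem blowup_point_center_simplyConnected
    {α : Type*} [Fintype α] [DecidableEq α] (I : Finset α) (infty : α)
    (hinfty : infty ∉ I) (H : Set (Finset α)) (hH : IsCSSOn I H)
    (hsc : SimplyConnected H) (i₁ i₂ i₃ : α)
    (hJ0 : ({i₁, i₂, i₃} : Finset α) ∈ level H 3) :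
    IsCSSOn (insert infty I)
        ((H3 H \ {({i₁, i₂, i₃} : Finset α)}) ∪
          {K : Finset α | ∃ J ∈ H, J.card ≤ 2 ∧
            J ∪ ({i₁, i₂, i₃} : Finset α) ∈ H ∧ K = insert infty J}) ∧
      SimplyConnected
        ((H3 H \ {({i₁, i₂, i₃} : Finset α)}) ∪
          {K : Finset α | ∃ J ∈ H, J.card ≤ 2 ∧
            J ∪ ({i₁, i₂, i₃} : Finset α) ∈ H ∧ K = insert infty J}) :=
  blowup_point_center_simplyConnected_general I infty hinfty H hH hsc i₁ i₂ i₃ hJ0
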